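/- Suppose ⟨p_ξ : ξ < λ⟩ is a ≤_{Q¹_S}-increasing sequence such that: (a) w^{p_ξ} = w^{p_0} for all ξ; (b) at limit γ, p_γ is the natural limit of ⟨p_ξ : ξ < γ⟩; (c) for each ξ, if δ ∈ C^{p_ξ} with otp(C^{p_ξ} ∩ δ) = ξ, then C^{p_{ξ+1}} ∩ (δ+1) = C^{p_ξ} ∩ (δ+1) and c^{p_{ξ+1}}_α = c^{p_ξ}_α for all α ∈ C^{p_{ξ+1}} ∩ δ. Then the sequence has an upper bound in Q¹_S. -/

import Mathlib

open Set

noncomputable section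

universe u

/-- `c` is an `(α,β)`-extending function: it maps subsets of `α` (coded as subsets of
`Set.Iio α`) to subsets of `β` that are not subsets of `α`, with `c u ∩ α = u`. -/
def ExtFun (α β : Ordinal.{u}) (c : Set Ordinal.{u} → Set Ordinal.{u}) : Prop :=
  ∀ u, u ⊆ Set.Iio α → c u ⊆ Set.Iio β ∧ ¬ c u ⊆ Set.Iio α ∧ c u ∩ Set.Iio α = u

/-- The next element of `C` above `α`. -/
def nextC (C : Set Ordinal.{u}) (α : Ordinal.{u}) : Ordinal.{u} := sInf (C ∩ Set.Ioi α)

/-- The least element of `C` above all elements of `w`. -/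
def firstAbove (C : Set Ordinal.{u}) (w : Set Ordinal.{u}) : Ordinal.{u} :=
  sInf {α ∈ C | w ⊆ Set.Iio α}

/-- The least element of `C` which is `≥ sup w`. -/
def minAboveSup (C : Set Ordinal.{u}) (w : Set Ordinal.{u}) : Ordinal.{u} :=
  sInf (C \ Set.Iio (sSup w))

/-- `C` is an unbounded subset of (the ordinals below) `lam`. -/
def UnbIn (lam : Ordinal.{u}) (C : Set Ordinal.{u}) : Prop :=
  C ⊆ Set.Iio lam ∧ ∀ α < lam, ∃ β ∈ C, α < β

/-- `C` is a club (closed and unbounded) subset of `lam`. -/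
def IsClubIn (lam : Ordinal.{u}) (C : Set Ordinal.{u}) : Prop :=
  UnbIn lam C ∧
    ∀ ξ < lam, (C ∩ Set.Iio ξ).Nonempty → ξ = sSup (C ∩ Set.Iio ξ) → ξ ∈ C

/-- `S` is a stationary subset of `lam`. -/
def StatIn (lam : Ordinal.{u}) (S : Set Ordinal.{u}) : Prop :=
  S ⊆ Set.Iio lam ∧ ∀ C, IsClubIn lam C → (S ∩ C).Nonempty

/-- `𝔠 = ⟨c α : α ∈ C⟩` is a `C`-extending sequence. -/
def CextSeq (lam : Ordinal.{u}) (C : Set Ordinal.{u})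
    (c : Ordinal.{u} → Set Ordinal.{u} → Set Ordinal.{u}) : Prop :=
  UnbIn lam C ∧ ∀ α ∈ C, ExtFun α (nextC C α) (c α)

/-- `pos⁺(w, 𝔠, β)`. -/
def posPlus (C : Set Ordinal.{u}) (c : Ordinal.{u} → Set Ordinal.{u} → Set Ordinal.{u})
    (w : Set Ordinal.{u}) (β : Ordinal.{u}) : Set (Set Ordinal.{u}) :=
  {u | u ⊆ Set.Iio β ∧
    u ∩ Set.Iio (firstAbove C w) = w ∧
    (∀ α₀ ∈ C, w ⊆ Set.Iio α₀ → (C ∩ Set.Ioi α₀).Nonempty → nextC C α₀ ≤ β →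
      (c α₀ (u ∩ Set.Iio α₀) = u ∩ Set.Iio (nextC C α₀) ∨
        u ∩ Set.Iio α₀ = u ∩ Set.Iio (nextC C α₀))) ∧
    (∀ α₀, sSup w < α₀ → α₀ ∉ C → (C ∩ Set.Iio α₀).Nonempty →
      α₀ = sSup (C ∩ Set.Iio α₀) → (C ∩ Set.Ioi α₀).Nonempty → nextC C α₀ ≤ β →
      u ∩ Set.Iio (nextC C α₀) = u ∩ Set.Iio α₀)}

/-- `pos(w, 𝔠, β)`. -/
def pos (C : Set Ordinal.{u}) (c : Ordinal.{u} → Set Ordinal.{u} → Set Ordinal.{u})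
    (w : Set Ordinal.{u}) (β : Ordinal.{u}) : Set (Set Ordinal.{u}) :=
  {u ∈ posPlus C c w β |
    firstAbove C w ≤ β → nextC C (firstAbove C w) ≤ β →
      u ∩ Set.Iio (nextC C (firstAbove C w)) = c (firstAbove C w) w}

/-- `w` is an `S`-closed set: limits of `w` lying in `S` belong to `w`. -/
def SClosed (S w : Set Ordinal.{u}) : Prop :=
  ∀ ξ, (w ∩ Set.Iio ξ).Nonempty → ξ = sSup (w ∩ Set.Iio ξ) → ξ ∈ S → ξ ∈ w

/-- `𝔠` is an `S`-closed `C`-extending sequence. -/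
def SClosedSeq (lam : Ordinal.{u}) (S C : Set Ordinal.{u})
    (c : Ordinal.{u} → Set Ordinal.{u} → Set Ordinal.{u}) : Prop :=
  IsClubIn lam C ∧ CextSeq lam C c ∧
  (∀ α ∈ C, ∀ u, u ⊆ Set.Iio α → α ∈ c α u) ∧
  (∀ ξ ∈ S, ξ ∉ C → ∀ α ∈ C ∩ Set.Iio ξ, ∀ u, u ⊆ Set.Iio α →
    ξ = sSup (c α u ∩ Set.Iio ξ) → ξ ∈ c α u)

/-- `pos⁺_S(w, 𝔠, β)`. -/
def posPlusS (S C : Set Ordinal.{u}) (c : Ordinal.{u} → Set Ordinal.{u} → Set Ordinal.{u})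
    (w : Set Ordinal.{u}) (β : Ordinal.{u}) : Set (Set Ordinal.{u}) :=
  {u ∈ posPlus C c w β | SClosed S (u ∪ {β})}

/-- `pos_S(w, 𝔠, β)`. -/
def posS (S C : Set Ordinal.{u}) (c : Ordinal.{u} → Set Ordinal.{u} → Set Ordinal.{u})
    (w : Set Ordinal.{u}) (β : Ordinal.{u}) : Set (Set Ordinal.{u}) :=
  {u ∈ pos C c w β | SClosed S (u ∪ {β})}

/-- A condition in the forcing notion `Q¹_S`: a triple `(w, C, 𝔠)` where `C` is a club of
`lam`, `w ⊆ min C` with `w ∪ {min C}` `S`-closed, and `𝔠` is an `S`-closed `C`-extending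
sequence (normalized to be `∅` outside its natural domain). -/
structure Q1S (lam : Ordinal.{u}) (S : Set Ordinal.{u}) where
  w : Set Ordinal.{u}
  C : Set Ordinal.{u}
  c : Ordinal.{u} → Set Ordinal.{u} → Set Ordinal.{u}
  seq : SClosedSeq lam S C c
  w_sub : w ⊆ Set.Iio (sInf C)
  w_cl : SClosed S (w ∪ {sInf C})
  norm : ∀ α u, (α ∉ C ∨ ¬ u ⊆ Set.Iio α) → c α u = ∅

/-- The order of `Q¹_S`. -/
def Q1Sle (lam : Ordinal.{u}) (S : Set Ordinal.{u}) (p q : Q1S lam S) : Prop :=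
  q.C ⊆ p.C ∧ q.w ∈ posPlusS S p.C p.c p.w (sInf q.C) ∧
  ∀ α₀ ∈ q.C, (q.C ∩ Set.Ioi α₀).Nonempty →
    ∀ u ∈ posPlusS S q.C q.c q.w α₀,
      q.c α₀ u ∈ posS S p.C p.c u (nextC q.C α₀)

open scoped Classical in
/-- Restriction of an extending sequence to a smaller domain `C` (normalized). -/
def restC (C : Set Ordinal.{u}) (c : Ordinal.{u} → Set Ordinal.{u} → Set Ordinal.{u}) :
    Ordinal.{u} → Set Ordinal.{u} → Set Ordinal.{u} :=
  fun α u => if α ∈ C ∧ u ⊆ Set.Iio α then c α u else ∅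

/-- `q` is the condition `p↾_α u = (u, C^p \ α, 𝔠^p ↾ (C^p \ α))`. -/
def IsRestrictedCond (lam : Ordinal.{u}) (S : Set Ordinal.{u}) (p : Q1S lam S)
    (α : Ordinal.{u}) (u : Set Ordinal.{u}) (q : Q1S lam S) : Prop :=
  q.w = u ∧ q.C = p.C ∩ Set.Ici α ∧ q.c = restC (p.C ∩ Set.Ici α) p.c

/-- The order type of a set of ordinals. -/
def otp (s : Set Ordinal.{u}) : Ordinal.{u + 1} := Ordinal.type (Subrel ((· < ·) : Ordinal.{u} → Ordinal.{u} → Prop) (· ∈ s))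

open scoped Classical in
/-- The extending sequence of the natural limit of an increasing sequence
`⟨p ξ : ξ < γ⟩` of conditions in `Q¹_S`. -/
def natLimitC (lam : Ordinal.{u}) (S : Set Ordinal.{u}) (γ : Ordinal.{u})
    (p : Ordinal.{u} → Q1S lam S) : Ordinal.{u} → Set Ordinal.{u} → Set Ordinal.{u} :=
  fun δ u =>
    if δ ∈ ⋂ ξ ∈ Set.Iio γ, (p ξ).C then
      if u ⊆ Set.Iio δ then
        if ∀ ξ < γ, u ∈ posPlusS S (p ξ).C (p ξ).c (p ξ).w δ then
          ⋃ ξ ∈ Set.Iio γ, (p ξ).c δ u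
        else u ∪ {δ}
      else ∅
    else ∅

/-- `G` is a filter on the forcing notion `Q¹_S`. -/
def QFilter (lam : Ordinal.{u}) (S : Set Ordinal.{u}) (G : Set (Q1S lam S)) : Prop :=
  G.Nonempty ∧ (∀ p ∈ G, ∀ q, Q1Sle lam S q p → q ∈ G) ∧
    ∀ p ∈ G, ∀ q ∈ G, ∃ r ∈ G, Q1Sle lam S p r ∧ Q1Sle lam S q r

/-- `G` is a generic filter on `Q¹_S`: a filter meeting every dense set. -/
def QGeneric (lam : Ordinal.{u}) (S : Set Ordinal.{u}) (G : Set (Q1S lam S)) : Prop :=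
  QFilter lam S G ∧ ∀ D : Set (Q1S lam S),
    (∀ p, ∃ q ∈ D, Q1Sle lam S p q) → (D ∩ G).Nonempty

section Game
variable {Q : Type*}

/-- `f` codes a legal partial play of `⅁₀^λ(Q, r)` of length `i` in which Complete
follows the strategy `σ`. -/
def IsPartialPlay (le : Q → Q → Prop) (r : Q)
    (σ : (Ordinal.{u} → Q × Q) → Ordinal.{u} → Q → Q) (i : Ordinal.{u})
    (f : Ordinal.{u} → Q × Q) : Prop :=
  ∀ j < i, le r (f j).1 ∧ (∀ k < j, le (f k).2 (f j).1) ∧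
    le (f j).1 (f j).2 ∧ (f j).2 = σ f j (f j).1

/-- `σ` is a winning strategy for Complete in `⅁₀^λ(Q, r)`: it depends only on the
history, Incomplete always has a legal move, and `σ` answers any legal move legally. -/
def WinningStrat (le : Q → Q → Prop) (lam : Ordinal.{u}) (r : Q)
    (σ : (Ordinal.{u} → Q × Q) → Ordinal.{u} → Q → Q) : Prop :=
  (∀ f g i p, (∀ j < i, f j = g j) → σ f i p = σ g i p) ∧
  ∀ i < lam, ∀ f, IsPartialPlay le r σ i f →
    (∃ p, le r p ∧ ∀ j < i, le (f j).2 p) ∧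
    (∀ p, le r p → (∀ j < i, le (f j).2 p) → le p (σ f i p))

/-- `Q` is strategically `(<λ)`-complete. -/
def StratComplete (Q : Type*) (le : Q → Q → Prop) (lam : Ordinal.{u}) : Prop :=
  ∀ r : Q, ∃ σ, WinningStrat le lam r σ

end Game

/-- A family `Fam ⊆ β^β` is `F`-dominating. -/
def Dominating {β : Type*} [LT β] (F : Set (Set β)) (Fam : Set (β → β)) : Prop :=
  ∀ g : β → β, ∃ f ∈ Fam, {a | g a < f a} ∈ F

/-- The `F`-dominating number `𝔡_F`. -/
def domNum {β : Type*} [LT β] (F : Set (Set β)) : Cardinal :=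
  sInf {c | ∃ Fam : Set (β → β), Dominating F Fam ∧ c = Cardinal.mk Fam}

/-- `U` is a (proper) filter on (the ordinals below) `lam`. -/
def FilterOn (lam : Ordinal.{u}) (U : Set (Set Ordinal.{u})) : Prop :=
  (∀ A ∈ U, A ⊆ Set.Iio lam) ∧ Set.Iio lam ∈ U ∧ ∅ ∉ U ∧
  (∀ A ∈ U, ∀ B ∈ U, A ∩ B ∈ U) ∧
  (∀ A ∈ U, ∀ B, A ⊆ B → B ⊆ Set.Iio lam → B ∈ U)

/-- The diagonal intersection of a `lam`-sequence of sets. -/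
def diagInter (lam : Ordinal.{u}) (A : Ordinal.{u} → Set Ordinal.{u}) : Set Ordinal.{u} :=
  {δ | δ < lam ∧ ∀ i < δ, δ ∈ A i}

/-- `U` is a normal filter on `lam`. -/
def NormalFilterOn (lam : Ordinal.{u}) (U : Set (Set Ordinal.{u})) : Prop :=
  FilterOn lam U ∧
    ∀ A : Ordinal.{u} → Set Ordinal.{u}, (∀ i < lam, A i ∈ U) → diagInter lam A ∈ U

/-- A condition in the forcing notion `Q²_𝒰`. -/
structure Q2U (lam : Ordinal.{u}) (U : Set (Set Ordinal.{u})) where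
  w : Set Ordinal.{u}
  C : Set Ordinal.{u}
  c : Ordinal.{u} → Set Ordinal.{u} → Set Ordinal.{u}
  C_mem : C ∈ U
  seq : CextSeq lam C c
  w_sub : w ⊆ Set.Iio (sInf C)
  norm : ∀ α u, (α ∉ C ∨ ¬ u ⊆ Set.Iio α) → c α u = ∅

/-- The order of `Q²_𝒰`. -/
def Q2Ule (lam : Ordinal.{u}) (U : Set (Set Ordinal.{u})) (p q : Q2U lam U) : Prop :=
  q.C ⊆ p.C ∧ q.w ∈ posPlus p.C p.c p.w (sInf q.C) ∧
  ∀ α₀ ∈ q.C, (q.C ∩ Set.Ioi α₀).Nonempty →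
    ∀ u ∈ posPlus q.C q.c q.w α₀,
      q.c α₀ u ∈ pos p.C p.c u (nextC q.C α₀)

/-- `q` is the condition `p↾_α u` in `Q²_𝒰`. -/
def IsRestrictedCond2 (lam : Ordinal.{u}) (U : Set (Set Ordinal.{u})) (p : Q2U lam U)
    (α : Ordinal.{u}) (u : Set Ordinal.{u}) (q : Q2U lam U) : Prop :=
  q.w = u ∧ q.C = p.C ∩ Set.Ici α ∧ q.c = restC (p.C ∩ Set.Ici α) p.c

end

/-! The upper bound is the natural limit `q` of the whole sequence, with `C^q = ⋂ C^{p_ξ}`.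
By (c), stage `ξ` freezes `C^{p_ξ}` up to its `ξ`-th element and the functions `c_α` below it;
with (b) at limits this shows that `next_{C^{p_ζ}}(α)` and `c^{p_ζ}_α(u)` no longer change once
`ζ > α`. Hence `C^q` is a club with `next_{C^q}(α) = next_{C^{p_{α+1}}}(α)`, and
`c^q_α(u) = c^{p_ζ}_α(u)` for `ζ > α`, so `q` is a condition. That `q` extends every `p_ξ` is
proved by induction on `α₀ ∈ C^q`: a position for `q` up to `α₀` is a position for every `p_ζ`,
because on each interval `[δ, next_{C^q}(δ))` it is given by `c^q_δ = c^{p_η}_δ` for large `η`,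
whose values lie in `pos(p_ζ)` as `p_ζ ≤ p_η`. -/

universe u

section LinearOrder
variable {X : Type*} [LinearOrder X] {s : Set X} {a b c d : X}

theorem inter_Iio_inter_Iio_of_le (h : a ≤ b) : s ∩ Iio b ∩ Iio a = s ∩ Iio a := by
  rw [inter_assoc, Iio_inter_Iio, min_eq_right h]

theorem inter_Iic_inter_Iic_of_le (h : a ≤ b) : s ∩ Iic b ∩ Iic a = s ∩ Iic a := by
  rw [inter_assoc, Iic_inter_Iic, inf_eq_right.2 h]

theorem inter_Iio_eq_of_inter_Iio_eq (hab : a ≤ b) (hbc : b ≤ c) (hcd : c ≤ d)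
    (h : s ∩ Iio a = s ∩ Iio d) : s ∩ Iio b = s ∩ Iio c := by
  refine (inter_subset_inter_right _ (Iio_subset_Iio hbc)).antisymm ?_
  calc s ∩ Iio c ⊆ s ∩ Iio d := inter_subset_inter_right _ (Iio_subset_Iio hcd)
    _ = s ∩ Iio a := h.symm
    _ ⊆ s ∩ Iio b := inter_subset_inter_right _ (Iio_subset_Iio hab)

end LinearOrder

section Ordinals
variable {lam α β x : Ordinal.{u}} {C D S u w : Set Ordinal.{u}}

theorem firstAbove_eq_sInf (hC : C.Nonempty) (hw : w ⊆ Iio (sInf C)) :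
    firstAbove C w = sInf C :=
  le_antisymm (csInf_le' ⟨csInf_mem hC, hw⟩)
    (le_csInf ⟨_, csInf_mem hC, hw⟩ fun _ hb => csInf_le' hb.1)

theorem nextC_mem (h : (C ∩ Ioi α).Nonempty) : nextC C α ∈ C ∩ Ioi α :=
  csInf_mem h

theorem nextC_le (hβ : β ∈ C) (hαβ : α < β) : nextC C α ≤ β :=
  csInf_le' ⟨hβ, hαβ⟩

theorem nextC_le_nextC (hDC : D ⊆ C) (hne : (D ∩ Ioi α).Nonempty) :
    nextC C α ≤ nextC D α :=
  nextC_le (hDC (nextC_mem hne).1) (nextC_mem hne).2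

theorem le_of_mem_of_lt_nextC (hβ : β ∈ C) (h : β < nextC C α) : β ≤ α :=
  not_lt.1 fun hαβ => (nextC_le hβ hαβ).not_gt h

theorem nextC_le_of_inter_Iic_eq {C' : Set Ordinal.{u}} (h : C ∩ Iic x = C' ∩ Iic x)
    (hx : x ∈ C ∩ Ioi α) : nextC C' α ≤ nextC C α := by
  have hm := nextC_mem ⟨x, hx⟩
  have hmC' : nextC C α ∈ C' ∩ Iic x := h ▸ ⟨hm.1, nextC_le hx.1 hx.2⟩
  exact nextC_le hmC'.1 hm.2

theorem IsClubIn.exists_mem_le_lt_nextC (hD : IsClubIn lam D) (hβ : β < lam) (hx : x ∈ D)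
    (hxβ : x ≤ β) : ∃ δ ∈ D, δ ≤ β ∧ β < nextC D δ := by
  have hbdd : BddAbove (D ∩ Iic β) := ⟨β, fun _ hy => hy.2⟩
  have hne : (D ∩ Iic β).Nonempty := ⟨x, hx, hxβ⟩
  set δ := sSup (D ∩ Iic β)
  have hδβ : δ ≤ β := csSup_le hne fun _ hy => hy.2
  have hδ : δ ∈ D := by
    by_contra hδ
    have heq : D ∩ Iio δ = D ∩ Iic β := by
      ext y
      refine ⟨fun hy => ⟨hy.1, hy.2.le.trans hδβ⟩, fun hy => ⟨hy.1, ?_⟩⟩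
      exact (le_csSup hbdd hy).lt_of_ne (ne_of_mem_of_not_mem hy.1 hδ)
    exact hδ (hD.2 δ (hδβ.trans_lt hβ) (heq ▸ hne) (heq ▸ rfl))
  refine ⟨δ, hδ, hδβ, not_le.1 fun h => ?_⟩
  obtain ⟨β', hβ'D, hββ'⟩ := hD.1.2 β hβ
  have hn := nextC_mem ⟨β', hβ'D, hδβ.trans_lt hββ'⟩
  exact (le_csSup hbdd ⟨hn.1, h⟩).not_gt hn.2

theorem mem_biInter_of_isClubIn {ι : Type*} {I : Set ι} {E : ι → Set Ordinal.{u}}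
    (hE : ∀ i ∈ I, IsClubIn lam (E i)) {ξ : Ordinal.{u}} (hξ : ξ < lam)
    (hne : ((⋂ i ∈ I, E i) ∩ Iio ξ).Nonempty)
    (hsup : ξ = sSup ((⋂ i ∈ I, E i) ∩ Iio ξ)) :
    ξ ∈ ⋂ i ∈ I, E i := by
  refine mem_iInter₂.2 fun i hi => (hE i hi).2 ξ hξ ?_ ?_
  · exact hne.mono (inter_subset_inter_left _ (biInter_subset_of_mem hi))
  · refine le_antisymm ?_ (csSup_le' fun _ hy => hy.2.le)
    exact hsup.trans_le (csSup_le_csSup ⟨ξ, fun _ hy => hy.2.le⟩ hne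
      (inter_subset_inter_left _ (biInter_subset_of_mem hi)))

theorem extFun_union_singleton (h : α < β) : ExtFun α β (· ∪ {α}) := by
  intro u hu
  refine ⟨union_subset (hu.trans (Iio_subset_Iio h.le)) (singleton_subset_iff.2 h),
    fun hsub => lt_irrefl α (hsub (mem_union_right _ rfl)), ?_⟩
  rw [union_inter_distrib_right, inter_eq_left.2 hu,
    (singleton_inter_eq_empty (s := Iio α)).2 (lt_irrefl α), union_empty]

end Ordinals

section Pos
variable {lam α₀ β₀ : Ordinal.{u}} {S C D u w : Set Ordinal.{u}}
  {c d : Ordinal.{u} → Set Ordinal.{u} → Set Ordinal.{u}}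

theorem SClosed.inter_Iio_union_singleton (hcl : SClosed S (u ∪ {α₀})) (hβ : β₀ ≤ α₀) :
    SClosed S (u ∩ Iio β₀ ∪ {β₀}) := by
  intro ξ hne hsup hξS
  rcases lt_trichotomy ξ β₀ with hlt | rfl | hgt
  · have h1 : (u ∩ Iio β₀ ∪ {β₀}) ∩ Iio ξ = u ∩ Iio ξ := by
      ext y
      simp only [mem_inter_iff, mem_union, mem_singleton_iff, mem_Iio]
      constructor
      · rintro ⟨⟨hy, -⟩ | rfl, hyξ⟩
        exacts [⟨hy, hyξ⟩, absurd hlt (lt_asymm hyξ)]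
      · exact fun ⟨hy, hyξ⟩ => ⟨Or.inl ⟨hy, hyξ.trans hlt⟩, hyξ⟩
    have h2 : (u ∪ {α₀}) ∩ Iio ξ = u ∩ Iio ξ := by
      rw [union_inter_distrib_right, (singleton_inter_eq_empty (s := Iio ξ)).2
        (not_lt.2 (hlt.trans_le hβ).le), union_empty]
    rw [h1] at hne hsup
    rcases hcl ξ (h2 ▸ hne) (h2 ▸ hsup) hξS with hξ | hξ
    · exact mem_union_left _ ⟨hξ, hlt⟩
    · exact absurd (hlt.trans_le hβ) (hξ ▸ lt_irrefl ξ)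
  · exact mem_union_right _ rfl
  · refine absurd (hsup.trans_le (csSup_le hne ?_)) hgt.not_ge
    rintro y ⟨⟨-, hy⟩ | rfl, -⟩
    exacts [hy.le, le_rfl]

theorem posPlus_inter_Iio (h : u ∈ posPlus C c w α₀) (hfa : firstAbove C w ≤ β₀)
    (hβ : β₀ ≤ α₀) : u ∩ Iio β₀ ∈ posPlus C c w β₀ := by
  obtain ⟨-, h2, h3, h4⟩ := h
  refine ⟨inter_subset_right, ?_, ?_, ?_⟩
  · rwa [inter_Iio_inter_Iio_of_le hfa]
  · intro γ hγ hwγ hne hle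
    rw [inter_Iio_inter_Iio_of_le ((nextC_mem hne).2.le.trans hle), inter_Iio_inter_Iio_of_le hle]
    exact h3 γ hγ hwγ hne (hle.trans hβ)
  · intro γ hsw hγ hne hsup hne' hle
    rw [inter_Iio_inter_Iio_of_le ((nextC_mem hne').2.le.trans hle), inter_Iio_inter_Iio_of_le hle]
    exact h4 γ hsw hγ hne hsup hne' (hle.trans hβ)

theorem posPlusS_inter_Iio (h : u ∈ posPlusS S C c w α₀) (hfa : firstAbove C w ≤ β₀)
    (hβ : β₀ ≤ α₀) : u ∩ Iio β₀ ∈ posPlusS S C c w β₀ :=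
  ⟨posPlus_inter_Iio h.1 hfa hβ, h.2.inter_Iio_union_singleton hβ⟩

theorem self_mem_posPlusS_sInf (hC : C.Nonempty) (hw : w ⊆ Iio (sInf C))
    (hcl : SClosed S (w ∪ {sInf C})) : w ∈ posPlusS S C c w (sInf C) := by
  have hnext : ∀ {α}, (C ∩ Ioi α).Nonempty → nextC C α ≤ sInf C → α < sInf C :=
    fun hne hle => (nextC_mem hne).2.trans_le hle
  refine ⟨⟨hw, by rw [firstAbove_eq_sInf hC hw, inter_eq_left.2 hw], ?_, ?_⟩, hcl⟩
  · exact fun α hα _ hne hle => absurd (hnext hne hle) (csInf_le' hα).not_gt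
  · intro α _ _ ⟨γ, hγ, hγα⟩ _ hne hle
    exact absurd ((hnext hne hle).trans_le (csInf_le' hγ)) hγα.not_gt

theorem exists_mem_le_lt_nextC_of_mem_posPlusS (hD : IsClubIn lam D) (hw : w ⊆ Iio (sInf D))
    (hα₀ : α₀ ∈ D)
    (hd : ∀ δ ∈ D, δ < α₀ → ∀ v ∈ posPlusS S D d w δ,
      d δ v ∈ posPlus C c v (nextC D δ))
    (hu : u ∈ posPlusS S D d w α₀) (hβα : β₀ < α₀) (hβ : sInf D ≤ β₀) :
    ∃ δ ∈ D, δ ≤ β₀ ∧ nextC D δ ∈ D ∩ Ioi β₀ ∧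
      (u ∩ Iio (nextC D δ) ∈ posPlus C c (u ∩ Iio δ) (nextC D δ) ∨
        u ∩ Iio δ = u ∩ Iio (nextC D δ)) := by
  have hDne : D.Nonempty := ⟨α₀, hα₀⟩
  obtain ⟨δ, hδ, hδβ, hβδ⟩ :=
    hD.exists_mem_le_lt_nextC (hβα.trans (hD.1.1 hα₀)) (csInf_mem hDne) hβ
  have hδα := hδβ.trans_lt hβα
  have hfa : firstAbove D w ≤ δ := firstAbove_eq_sInf hDne hw ▸ csInf_le' hδ
  refine ⟨δ, hδ, hδβ, ⟨(nextC_mem ⟨α₀, hα₀, hδα⟩).1, hβδ⟩, ?_⟩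
  rcases hu.1.2.2.1 δ hδ (hw.trans (Iio_subset_Iio (csInf_le' hδ))) ⟨α₀, hα₀, hδα⟩
    (nextC_le hα₀ hδα) with h | h
  · exact Or.inl (h ▸ hd δ hδ hδα _ (posPlusS_inter_Iio hu hfa hδα.le))
  · exact Or.inr h

/-- Every `β₀` about which the clauses of `pos⁺` for `C` ask lies in an interval
`[δ, nextC D δ)` with `δ ∈ D`, on which `u` is given by `d δ`. -/
theorem posPlusS_subset_posPlusS (hD : IsClubIn lam D) (hDC : D ⊆ C) (hinf : sInf D = sInf C)
    (hw : w ⊆ Iio (sInf D)) (hα₀ : α₀ ∈ D)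
    (hd : ∀ δ ∈ D, δ < α₀ → ∀ v ∈ posPlusS S D d w δ,
      d δ v ∈ posPlus C c v (nextC D δ)) :
    posPlusS S D d w α₀ ⊆ posPlusS S C c w α₀ := by
  intro u hu
  have hDne : D.Nonempty := ⟨α₀, hα₀⟩
  have reduce := fun β₀ hβα (hβ : sInf C ≤ β₀) =>
    exists_mem_le_lt_nextC_of_mem_posPlusS hD hw hα₀ hd hu hβα (hinf ▸ hβ)
  obtain ⟨⟨h1, h2, -, -⟩, hcl⟩ := hu
  refine ⟨⟨h1, ?_, ?_, ?_⟩, hcl⟩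
  · rwa [firstAbove_eq_sInf (hDne.mono hDC) (hinf ▸ hw), ← hinf,
      ← firstAbove_eq_sInf hDne hw]
  · intro β₀ hβ₀ hwβ hne hle
    have hβ : β₀ < nextC C β₀ := (nextC_mem hne).2
    obtain ⟨δ, -, hδβ, hnD, hu⟩ := reduce β₀ (hβ.trans_le hle) (csInf_le' hβ₀)
    have hnext := nextC_le (hDC hnD.1) hnD.2
    rcases hu with h | h
    · have := h.2.2.1 β₀ hβ₀ (fun _ hy => hy.2.trans_le hδβ) hne hnext
      rwa [inter_Iio_inter_Iio_of_le (hβ.le.trans hnext), inter_Iio_inter_Iio_of_le hnext] at this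
    · exact Or.inr (inter_Iio_eq_of_inter_Iio_eq hδβ hβ.le hnext h)
  · intro β₀ hsw hβ₀ ⟨γ, hγ, hγβ⟩ hsup hne hle
    have hβ : β₀ < nextC C β₀ := (nextC_mem hne).2
    obtain ⟨δ, hδ, hδβ, hnD, hu⟩ :=
      reduce β₀ (hβ.trans_le hle) ((csInf_le' hγ).trans hγβ.le)
    have hnext := nextC_le (hDC hnD.1) hnD.2
    rcases hu with h | h
    · have hδβ' : δ < β₀ := hδβ.lt_of_ne (ne_of_mem_of_not_mem (hDC hδ) hβ₀)
      have := h.2.2.2 β₀ ((csSup_le' fun _ hy => hy.2.le).trans_lt hδβ') hβ₀ ⟨γ, hγ, hγβ⟩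
        hsup hne hnext
      rwa [inter_Iio_inter_Iio_of_le (hβ.le.trans hnext), inter_Iio_inter_Iio_of_le hnext] at this
    · exact (inter_Iio_eq_of_inter_Iio_eq hδβ hβ.le hnext h).symm

end Pos

namespace Q1S
variable {lam α : Ordinal.{u}} {S : Set Ordinal.{u}}

theorem C_inter_Ioi_nonempty (p : Q1S lam S) (hα : α < lam) : (p.C ∩ Ioi α).Nonempty :=
  p.seq.1.1.2 α hα

theorem C_nonempty (p : Q1S lam S) (hlam : 0 < lam) : p.C.Nonempty :=
  (p.C_inter_Ioi_nonempty hlam).mono inter_subset_left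

end Q1S

theorem Q1Sle.c_subset {lam α : Ordinal.{u}} {S u : Set Ordinal.{u}} {p q : Q1S lam S}
    (h : Q1Sle lam S p q) (hα : α ∈ q.C) (hne : (q.C ∩ Ioi α).Nonempty)
    (hu : u ∈ posPlusS S q.C q.c q.w α) : p.c α u ⊆ q.c α u := by
  have hext := q.seq.2.1.2 α hα u hu.1.1
  have hne' := hne.mono (inter_subset_inter_left _ h.1)
  have hmem := (h.2.2 α hα hne u hu).1.1.2.2.1 α (h.1 hα) hu.1.1 hne' (nextC_le_nextC h.1 hne)
  rw [hext.2.2] at hmem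
  rcases hmem with heq | heq
  · exact heq ▸ inter_subset_left
  · have hαu : α ∈ u := heq ▸ ⟨q.seq.2.2.1 α hα u hu.1.1, (nextC_mem hne').2⟩
    exact absurd (hu.1.1 hαu) (lt_irrefl α)

/-- `T = C ∪ [κ, ∞)` is unbounded, so `enumOrd T` enumerates it; by regularity its values
below `κ` are the elements of `C`. -/
theorem UnbIn.exists_otp_inter_Iio_eq {κ : Cardinal.{u}} (hκ : κ.IsRegular) {C : Set Ordinal.{u}}
    (hC : UnbIn κ.ord C) {ζ : Ordinal.{u}} (hζ : ζ < κ.ord) :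
    ∃ δ ∈ C, ζ ≤ δ ∧ otp (C ∩ Iio δ) = Ordinal.lift.{u + 1} ζ := by
  set T : Set Ordinal.{u} := C ∪ Ici κ.ord
  have hT : ¬ BddAbove T := not_bddAbove_iff.2 fun a =>
    ⟨max (a + 1) κ.ord, Or.inr (mem_Ici.2 (le_max_right _ _)),
      (lt_add_one a).trans_le (le_max_left _ _)⟩
  have hmono := Ordinal.enumOrd_strictMono hT
  have hlt : ∀ ξ < κ.ord, Ordinal.enumOrd T ξ < κ.ord := by
    intro ξ hξ
    induction ξ using WellFoundedLT.induction with
    | _ ξ IH =>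
    have hsup : ⨆ j : Iio ξ, Ordinal.enumOrd T j < κ.ord := by
      refine Ordinal.lift_iSup_lt_of_lt_cof ?_ fun j => IH j j.2 (j.2.trans hξ)
      rw [Cardinal.mk_Iio_ordinal, ← Ordinal.lift_cof, hκ.cof_ord, Cardinal.lift_lift,
        Cardinal.lift_lt]
      exact Cardinal.lt_ord.1 hξ
    obtain ⟨β, hβC, hβ⟩ := hC.2 _ hsup
    exact (Ordinal.enumOrd_le_of_forall_lt (Or.inl hβC) fun j hj =>
      (Ordinal.le_iSup (fun j : Iio ξ => Ordinal.enumOrd T j) ⟨j, hj⟩).trans_lt hβ).trans_lt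
      (hC.1 hβC)
  have hmemC : ∀ ξ < κ.ord, Ordinal.enumOrd T ξ ∈ C := fun ξ hξ =>
    (Ordinal.enumOrd_mem hT ξ).resolve_right (hlt ξ hξ).not_ge
  have himg : C ∩ Iio (Ordinal.enumOrd T ζ) = Ordinal.enumOrd T '' Iio ζ := by
    ext x
    constructor
    · rintro ⟨hxC, hx⟩
      obtain ⟨j, rfl⟩ : x ∈ range (Ordinal.enumOrd T) := by
        rw [Ordinal.range_enumOrd hT]; exact Or.inl hxC
      exact ⟨j, hmono.lt_iff_lt.1 hx, rfl⟩
    · rintro ⟨j, hj, rfl⟩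
      exact ⟨hmemC j (hj.trans hζ), hmono hj⟩
  refine ⟨Ordinal.enumOrd T ζ, hmemC ζ hζ, hmono.le_apply, ?_⟩
  rw [himg, ← Ordinal.typein_ordinal ζ, ← Ordinal.type_subrel (α := Ordinal.{u}) (· < ·) ζ]
  exact Ordinal.type_eq.2 ⟨(RelIso.symm
    ⟨Equiv.Set.imageOfInjOn _ _ hmono.injective.injOn, hmono.lt_iff_lt⟩)⟩

theorem Ordinal.eq_of_forall_succ_of_forall_isSuccLimit {X : Type*} {lam a : Ordinal.{u}}
    {f : Ordinal.{u} → X}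
    (succ : ∀ η, a ≤ η → η + 1 < lam → f η = f a → f (η + 1) = f a)
    (limit : ∀ ζ < lam, Order.IsSuccLimit ζ → a < ζ →
      (∀ ξ, a ≤ ξ → ξ < ζ → f ξ = f a) → f ζ = f a) :
    ∀ ζ, a ≤ ζ → ζ < lam → f ζ = f a := by
  intro ζ
  induction ζ using WellFoundedLT.induction with
  | _ ζ IH =>
  intro haζ hζ
  rcases haζ.eq_or_lt with rfl | haζ
  · rfl
  rcases Ordinal.zero_or_succ_or_isSuccLimit ζ with rfl | ⟨η, rfl⟩ | hlim
  · exact absurd haζ not_lt_zero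
  · rw [Order.succ_eq_add_one] at haζ hζ ⊢
    have haη := Order.lt_add_one_iff.1 haζ
    exact succ η haη hζ (IH η (lt_add_one η) haη ((lt_add_one η).trans hζ))
  · exact limit ζ hζ hlim haζ fun ξ haξ hξ => IH ξ hξ haξ (hξ.trans hζ)

section NatLimit
variable {lam γ δ : Ordinal.{u}} {S u : Set Ordinal.{u}} {p : Ordinal.{u} → Q1S lam S}

def natLimitClub (γ : Ordinal.{u}) (p : Ordinal.{u} → Q1S lam S) : Set Ordinal.{u} :=
  ⋂ ξ ∈ Iio γ, (p ξ).C

theorem mem_natLimitClub : δ ∈ natLimitClub γ p ↔ ∀ ξ < γ, δ ∈ (p ξ).C := by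
  simp [natLimitClub]

theorem natLimitC_of_forall_mem (hδ : δ ∈ natLimitClub γ p) (hu : u ⊆ Iio δ)
    (hpos : ∀ ξ < γ, u ∈ posPlusS S (p ξ).C (p ξ).c (p ξ).w δ) :
    natLimitC lam S γ p δ u = ⋃ ξ ∈ Iio γ, (p ξ).c δ u := by
  rw [natLimitC, if_pos (show δ ∈ ⋂ ξ ∈ Iio γ, (p ξ).C from hδ), if_pos hu, if_pos hpos]

theorem natLimitC_of_not_forall_mem (hδ : δ ∈ natLimitClub γ p) (hu : u ⊆ Iio δ)
    (hpos : ¬ ∀ ξ < γ, u ∈ posPlusS S (p ξ).C (p ξ).c (p ξ).w δ) :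
    natLimitC lam S γ p δ u = u ∪ {δ} := by
  rw [natLimitC, if_pos (show δ ∈ ⋂ ξ ∈ Iio γ, (p ξ).C from hδ), if_pos hu, if_neg hpos]

theorem natLimitC_eq_empty (h : δ ∉ natLimitClub γ p ∨ ¬ u ⊆ Iio δ) :
    natLimitC lam S γ p δ u = ∅ := by
  by_cases hδ : δ ∈ natLimitClub γ p
  · rw [natLimitC, if_pos (show δ ∈ ⋂ ξ ∈ Iio γ, (p ξ).C from hδ),
      if_neg (h.resolve_left (not_not.2 hδ))]
  · rw [natLimitC, if_neg (show δ ∉ ⋂ ξ ∈ Iio γ, (p ξ).C from hδ)]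

end NatLimit

/-- An increasing `κ`-sequence in `Q¹_S` satisfying the fusion requirements (a)–(c). -/
structure IsFusionSeq (κ : Cardinal.{u}) (S : Set Ordinal.{u}) (p : Ordinal.{u} → Q1S κ.ord S) :
    Prop where
  isRegular : κ.IsRegular
  mono : ∀ ξ ζ, ξ < ζ → ζ < κ.ord → Q1Sle κ.ord S (p ξ) (p ζ)
  w_eq : ∀ ξ < κ.ord, (p ξ).w = (p 0).w
  C_limit : ∀ γ < κ.ord, Order.IsSuccLimit γ → (p γ).C = natLimitClub γ p
  c_limit : ∀ γ < κ.ord, Order.IsSuccLimit γ → (p γ).c = natLimitC κ.ord S γ p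
  agree_succ : ∀ ξ < κ.ord, ∀ δ ∈ (p ξ).C,
    otp ((p ξ).C ∩ Iio δ) = Ordinal.lift.{u + 1} ξ →
    (p (ξ + 1)).C ∩ Iic δ = (p ξ).C ∩ Iic δ ∧
      ∀ α ∈ (p (ξ + 1)).C ∩ Iio δ, (p (ξ + 1)).c α = (p ξ).c α

namespace IsFusionSeq
variable {κ : Cardinal.{u}} {S u v : Set Ordinal.{u}} {p : Ordinal.{u} → Q1S κ.ord S}
  {a α β δ ξ ζ x : Ordinal.{u}}

theorem add_one_lt (hp : IsFusionSeq κ S p) (hξ : ξ < κ.ord) : ξ + 1 < κ.ord :=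
  Order.succ_eq_add_one ξ ▸ (Cardinal.isSuccLimit_ord hp.isRegular.aleph0_le).succ_lt hξ

theorem ord_pos (hp : IsFusionSeq κ S p) : 0 < κ.ord :=
  (Cardinal.isSuccLimit_ord hp.isRegular.aleph0_le).bot_lt

theorem C_subset_C (hp : IsFusionSeq κ S p) (hξζ : ξ ≤ ζ) (hζ : ζ < κ.ord) :
    (p ζ).C ⊆ (p ξ).C := by
  rcases hξζ.eq_or_lt with rfl | h
  exacts [subset_rfl, (hp.mono ξ ζ h hζ).1]

theorem exists_cut (hp : IsFusionSeq κ S p) (hξ : ξ < κ.ord) :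
    ∃ δ ∈ (p ξ).C, ξ ≤ δ ∧ (p (ξ + 1)).C ∩ Iic δ = (p ξ).C ∩ Iic δ ∧
      ∀ α ∈ (p (ξ + 1)).C ∩ Iio δ, (p (ξ + 1)).c α = (p ξ).c α := by
  obtain ⟨δ, hδ, hξδ, hotp⟩ := UnbIn.exists_otp_inter_Iio_eq hp.isRegular (p ξ).seq.1.1 hξ
  exact ⟨δ, hδ, hξδ, hp.agree_succ ξ hξ δ hδ hotp⟩

/-- The cut point `δ ≥ ξ` of each later stage `ξ ≥ a` lies above `x`, so (c) leaves
`C ∩ [0, x]` unchanged. -/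
theorem C_inter_Iic_eq (hp : IsFusionSeq κ S p) (hx : ∀ y ∈ (p a).C, y < x → y < a) :
    ∀ ζ, a ≤ ζ → ζ < κ.ord → (p ζ).C ∩ Iic x = (p a).C ∩ Iic x := by
  refine Ordinal.eq_of_forall_succ_of_forall_isSuccLimit (f := fun ζ => (p ζ).C ∩ Iic x) ?_ ?_
  · intro η haη hη IH
    obtain ⟨δ, hδ, hηδ, hcut, -⟩ := hp.exists_cut ((lt_add_one η).trans hη)
    have hxδ : x ≤ δ := not_lt.1 fun hδx =>
      (hx δ (IH ▸ ⟨hδ, hδx.le⟩ : δ ∈ (p a).C ∩ Iic x).1 hδx).not_ge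
        (haη.trans hηδ)
    rw [← inter_Iic_inter_Iic_of_le hxδ, hcut, inter_Iic_inter_Iic_of_le hxδ, IH]
  · intro ζ hζ hlim haζ IH
    rw [hp.C_limit ζ hζ hlim]
    ext y
    refine ⟨fun hy => ⟨mem_natLimitClub.1 hy.1 a haζ, hy.2⟩, fun hy => ⟨?_, hy.2⟩⟩
    refine mem_natLimitClub.2 fun ξ hξ => ?_
    rcases lt_or_ge ξ a with hξa | haξ
    · exact hp.C_subset_C hξa.le (haζ.trans hζ) hy.1
    · exact ((IH ξ haξ hξ).symm ▸ hy : y ∈ (p ξ).C ∩ Iic x).1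

theorem C_inter_Iic_nextC_eq (hp : IsFusionSeq κ S p) (hζ : ζ < κ.ord) (hαζ : α < ζ) :
    (p ζ).C ∩ Iic (nextC (p (α + 1)).C α) = (p (α + 1)).C ∩ Iic (nextC (p (α + 1)).C α) :=
  hp.C_inter_Iic_eq (fun _ hy hlt => Order.lt_add_one_iff.2 (le_of_mem_of_lt_nextC hy hlt)) ζ
    (Order.add_one_le_iff.2 hαζ) hζ

theorem nextC_mem_natLimitClub (hp : IsFusionSeq κ S p) (hα : α < κ.ord) :
    nextC (p (α + 1)).C α ∈ natLimitClub κ.ord p ∩ Ioi α := by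
  have hx := nextC_mem ((p (α + 1)).C_inter_Ioi_nonempty hα)
  refine ⟨mem_natLimitClub.2 fun ξ hξ => ?_, hx.2⟩
  rcases lt_or_ge α ξ with hαξ | hξα
  · exact ((Set.ext_iff.1 (hp.C_inter_Iic_nextC_eq hξ hαξ) _).2 ⟨hx.1, self_mem_Iic⟩).1
  · exact hp.C_subset_C (hξα.trans (lt_add_one α).le) (hp.add_one_lt hα) hx.1

theorem nextC_natLimitClub (hp : IsFusionSeq κ S p) (hα : α < κ.ord) (hζ : ζ < κ.ord)
    (hαζ : α < ζ) : nextC (natLimitClub κ.ord p) α = nextC (p ζ).C α := by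
  have hx := hp.nextC_mem_natLimitClub hα
  have hsub : natLimitClub κ.ord p ⊆ (p ζ).C := fun _ hy => mem_natLimitClub.1 hy ζ hζ
  refine le_antisymm ?_ (nextC_le_nextC hsub ⟨_, hx⟩)
  exact (nextC_le hx.1 hx.2).trans
    (nextC_le_of_inter_Iic_eq (hp.C_inter_Iic_nextC_eq hζ hαζ) ⟨hsub hx.1, hx.2⟩)

theorem sInf_C_mem_natLimitClub (hp : IsFusionSeq κ S p) :
    sInf (p 0).C ∈ natLimitClub κ.ord p := by
  have hm := csInf_mem ((p 0).C_nonempty hp.ord_pos)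
  refine mem_natLimitClub.2 fun ξ hξ => ?_
  have h := hp.C_inter_Iic_eq (fun y hy hlt => absurd (csInf_le' hy) hlt.not_ge) ξ
    zero_le hξ
  exact ((Set.ext_iff.1 h _).2 ⟨hm, self_mem_Iic⟩).1

theorem sInf_natLimitClub (hp : IsFusionSeq κ S p) :
    sInf (natLimitClub κ.ord p) = sInf (p 0).C :=
  IsLeast.csInf_eq ⟨hp.sInf_C_mem_natLimitClub,
    fun _ hy => csInf_le' (mem_natLimitClub.1 hy 0 hp.ord_pos)⟩

theorem sInf_C (hp : IsFusionSeq κ S p) (hζ : ζ < κ.ord) : sInf (p ζ).C = sInf (p 0).C :=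
  IsLeast.csInf_eq ⟨mem_natLimitClub.1 hp.sInf_C_mem_natLimitClub ζ hζ,
    fun _ hy => csInf_le' (hp.C_subset_C zero_le hζ hy)⟩

theorem isClubIn_natLimitClub (hp : IsFusionSeq κ S p) :
    IsClubIn κ.ord (natLimitClub κ.ord p) :=
  ⟨⟨fun _ hy => (p 0).seq.1.1.1 (mem_natLimitClub.1 hy 0 hp.ord_pos),
    fun _ hα => ⟨_, hp.nextC_mem_natLimitClub hα⟩⟩,
    fun _ hξ => mem_biInter_of_isClubIn (fun i _ => (p i).seq.1) hξ⟩


theorem exists_gt (hp : IsFusionSeq κ S p) (hα : α < κ.ord) (hβ : β < κ.ord) :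
    ∃ η < κ.ord, α < η ∧ β < η :=
  ⟨max α β + 1, hp.add_one_lt (max_lt hα hβ), Order.lt_add_one_iff.2 (le_max_left _ _),
    Order.lt_add_one_iff.2 (le_max_right _ _)⟩

theorem biUnion_c_eq_c_add_one (hp : IsFusionSeq κ S p) (hδ : δ ∈ natLimitClub κ.ord p)
    (hpos : ∀ ξ < κ.ord, u ∈ posPlusS S (p ξ).C (p ξ).c (p ξ).w δ) (hζ : ζ ≤ κ.ord)
    (hδζ : δ + 1 < ζ)
    (hconst : ∀ ξ, δ + 1 ≤ ξ → ξ < ζ → (p ξ).c δ u = (p (δ + 1)).c δ u) :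
    ⋃ ξ ∈ Iio ζ, (p ξ).c δ u = (p (δ + 1)).c δ u := by
  have hδ1 := hδζ.trans_le hζ
  refine (iUnion₂_subset fun ξ hξ => ?_).antisymm
    (subset_biUnion_of_mem (u := fun ξ => (p ξ).c δ u) hδζ)
  rcases lt_or_ge ξ (δ + 1) with h | h
  · exact (hp.mono ξ _ h hδ1).c_subset (mem_natLimitClub.1 hδ _ hδ1)
      ((p _).C_inter_Ioi_nonempty (hp.isClubIn_natLimitClub.1.1 hδ)) (hpos _ hδ1)
  · exact (hconst ξ h hξ).le

theorem c_eq_c_add_one (hp : IsFusionSeq κ S p) (hδ : δ ∈ natLimitClub κ.ord p)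
    (hu : u ⊆ Iio δ) (hpos : ∀ ξ < κ.ord, u ∈ posPlusS S (p ξ).C (p ξ).c (p ξ).w δ) :
    ∀ ζ, δ + 1 ≤ ζ → ζ < κ.ord → (p ζ).c δ u = (p (δ + 1)).c δ u := by
  refine Ordinal.eq_of_forall_succ_of_forall_isSuccLimit (f := fun ζ => (p ζ).c δ u) ?_ ?_
  · intro η hη hη1 IH
    obtain ⟨γ, -, hηγ, -, hcut⟩ := hp.exists_cut ((lt_add_one η).trans hη1)
    exact (congrFun (hcut δ ⟨mem_natLimitClub.1 hδ _ hη1,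
      (Order.add_one_le_iff.1 hη).trans_le hηγ⟩) u).trans IH
  · intro ζ hζ hlim hδζ IH
    have hδζ' : δ ∈ natLimitClub ζ p :=
      mem_natLimitClub.2 fun ξ hξ => mem_natLimitClub.1 hδ ξ (hξ.trans hζ)
    change (p ζ).c δ u = _
    rw [hp.c_limit ζ hζ hlim,
      natLimitC_of_forall_mem hδζ' hu fun ξ hξ => hpos ξ (hξ.trans hζ)]
    exact hp.biUnion_c_eq_c_add_one hδ hpos hζ.le hδζ IH

theorem natLimitC_eq_c (hp : IsFusionSeq κ S p) (hδ : δ ∈ natLimitClub κ.ord p)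
    (hu : u ⊆ Iio δ) (hpos : ∀ ξ < κ.ord, u ∈ posPlusS S (p ξ).C (p ξ).c (p ξ).w δ)
    (hζ : ζ < κ.ord) (hδζ : δ < ζ) : natLimitC κ.ord S κ.ord p δ u = (p ζ).c δ u := by
  rw [natLimitC_of_forall_mem hδ hu hpos,
    hp.c_eq_c_add_one hδ hu hpos ζ (Order.add_one_le_iff.2 hδζ) hζ]
  exact hp.biUnion_c_eq_c_add_one hδ hpos le_rfl
    (hp.add_one_lt (hp.isClubIn_natLimitClub.1.1 hδ)) (hp.c_eq_c_add_one hδ hu hpos)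

theorem natLimitC_mem_posS (hp : IsFusionSeq κ S p) (hδ : δ ∈ natLimitClub κ.ord p)
    (hpos : ∀ η < κ.ord, v ∈ posPlusS S (p η).C (p η).c (p η).w δ) (hζ : ζ < κ.ord) :
    natLimitC κ.ord S κ.ord p δ v ∈
      posS S (p ζ).C (p ζ).c v (nextC (natLimitClub κ.ord p) δ) := by
  have hδlt := hp.isClubIn_natLimitClub.1.1 hδ
  obtain ⟨η, hη, hζη, hδη⟩ := hp.exists_gt hζ hδlt
  rw [hp.natLimitC_eq_c hδ (hpos 0 hp.ord_pos).1.1 hpos hη hδη,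
    hp.nextC_natLimitClub hδlt hη hδη]
  exact (hp.mono ζ η hζη hη).2.2 δ (mem_natLimitClub.1 hδ η hη)
    ((p η).C_inter_Ioi_nonempty hδlt) v (hpos η hη)

theorem posPlusS_natLimit_subset (hp : IsFusionSeq κ S p) :
    ∀ α₀ ∈ natLimitClub κ.ord p, ∀ ζ < κ.ord,
      posPlusS S (natLimitClub κ.ord p) (natLimitC κ.ord S κ.ord p) (p 0).w α₀ ⊆
        posPlusS S (p ζ).C (p ζ).c (p ζ).w α₀ := by
  intro α₀
  induction α₀ using WellFoundedLT.induction with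
  | _ α₀ IH =>
  intro hα₀ ζ hζ
  rw [hp.w_eq ζ hζ]
  refine posPlusS_subset_posPlusS hp.isClubIn_natLimitClub
    (fun _ hy => mem_natLimitClub.1 hy ζ hζ) (by rw [hp.sInf_natLimitClub, hp.sInf_C hζ])
    (hp.sInf_natLimitClub ▸ (p 0).w_sub) hα₀ fun δ hδ hδα v hv => ?_
  exact (hp.natLimitC_mem_posS hδ (fun η hη => IH δ hδα hδ η hη hv) hζ).1.1

theorem sClosedSeq_natLimit (hp : IsFusionSeq κ S p) :
    SClosedSeq κ.ord S (natLimitClub κ.ord p) (natLimitC κ.ord S κ.ord p) := by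
  have hD := hp.isClubIn_natLimitClub
  refine ⟨hD, ⟨hD.1, fun δ hδ u hu => ?_⟩, fun δ hδ u hu => ?_, ?_⟩
  · have hδlt := hD.1.1 hδ
    by_cases hpos : ∀ ξ < κ.ord, u ∈ posPlusS S (p ξ).C (p ξ).c (p ξ).w δ
    · rw [hp.natLimitC_eq_c hδ hu hpos (hp.add_one_lt hδlt) (lt_add_one δ),
        hp.nextC_natLimitClub hδlt (hp.add_one_lt hδlt) (lt_add_one δ)]
      exact (p (δ + 1)).seq.2.1.2 δ (mem_natLimitClub.1 hδ _ (hp.add_one_lt hδlt)) u hu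
    · rw [natLimitC_of_not_forall_mem hδ hu hpos]
      exact extFun_union_singleton (nextC_mem (hD.1.2 δ hδlt)).2 u hu
  · have hδ1 := hp.add_one_lt (hD.1.1 hδ)
    by_cases hpos : ∀ ξ < κ.ord, u ∈ posPlusS S (p ξ).C (p ξ).c (p ξ).w δ
    · rw [hp.natLimitC_eq_c hδ hu hpos hδ1 (lt_add_one δ)]
      exact (p (δ + 1)).seq.2.2.1 δ (mem_natLimitClub.1 hδ _ hδ1) u hu
    · rw [natLimitC_of_not_forall_mem hδ hu hpos]
      exact mem_union_right _ rfl
  · intro x hxS hxD α hα u hu hsup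
    by_cases hpos : ∀ ξ < κ.ord, u ∈ posPlusS S (p ξ).C (p ξ).c (p ξ).w α
    · obtain ⟨ζ, hζ, hxC⟩ : ∃ ζ < κ.ord, x ∉ (p ζ).C := by
        simpa [mem_natLimitClub] using hxD
      obtain ⟨η, hη, hζη, hαη⟩ := hp.exists_gt hζ (hD.1.1 hα.1)
      rw [hp.natLimitC_eq_c hα.1 hu hpos hη hαη] at hsup ⊢
      exact (p η).seq.2.2.2 x hxS (fun h => hxC (hp.C_subset_C hζη.le hη h)) α
        ⟨mem_natLimitClub.1 hα.1 η hη, hα.2⟩ u hu hsup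
    · rw [natLimitC_of_not_forall_mem hα.1 hu hpos] at hsup
      refine absurd hsup (ne_of_gt ((csSup_le' ?_).trans_lt hα.2))
      rintro y ⟨hy | rfl, -⟩
      exacts [(hu hy).le, le_rfl]

noncomputable def natLimit (hp : IsFusionSeq κ S p) : Q1S κ.ord S where
  w := (p 0).w
  C := natLimitClub κ.ord p
  c := natLimitC κ.ord S κ.ord p
  seq := hp.sClosedSeq_natLimit
  w_sub := hp.sInf_natLimitClub ▸ (p 0).w_sub
  w_cl := hp.sInf_natLimitClub ▸ (p 0).w_cl
  norm := fun _ _ h => natLimitC_eq_empty h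

theorem le_natLimit (hp : IsFusionSeq κ S p) (hξ : ξ < κ.ord) :
    Q1Sle κ.ord S (p ξ) hp.natLimit := by
  refine ⟨fun _ hy => mem_natLimitClub.1 hy ξ hξ, ?_, fun α₀ hα₀ _ u hu => ?_⟩
  · change (p 0).w ∈ posPlusS S (p ξ).C (p ξ).c (p ξ).w (sInf (natLimitClub κ.ord p))
    rw [← hp.w_eq ξ hξ, hp.sInf_natLimitClub, ← hp.sInf_C hξ]
    exact self_mem_posPlusS_sInf ((p ξ).C_nonempty hp.ord_pos) (p ξ).w_sub (p ξ).w_cl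
  · exact hp.natLimitC_mem_posS hα₀
      (fun η hη => hp.posPlusS_natLimit_subset α₀ hα₀ η hη hu) hξ

end IsFusionSeq

theorem Q1S_fusion_general (κ : Cardinal.{0}) (hκ : κ.IsInaccessible) (S : Set Ordinal)
    (p : Ordinal → Q1S κ.ord S)
    (hmono : ∀ ξ ζ, ξ < ζ → ζ < κ.ord → Q1Sle κ.ord S (p ξ) (p ζ))
    (ha : ∀ ξ < κ.ord, (p ξ).w = (p 0).w)
    (hb : ∀ γ < κ.ord, Order.IsSuccLimit γ →
      (p γ).w = (⋃ ξ ∈ Set.Iio γ, (p ξ).w) ∧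
      (p γ).C = (⋂ ξ ∈ Set.Iio γ, (p ξ).C) ∧
      (p γ).c = natLimitC κ.ord S γ p)
    (hc : ∀ ξ < κ.ord, ∀ δ ∈ (p ξ).C,
      otp ((p ξ).C ∩ Set.Iio δ) = Ordinal.lift.{1} ξ →
      (p (ξ + 1)).C ∩ Set.Iic δ = (p ξ).C ∩ Set.Iic δ ∧
      ∀ α ∈ (p (ξ + 1)).C ∩ Set.Iio δ, (p (ξ + 1)).c α = (p ξ).c α) :
    ∃ q : Q1S κ.ord S, ∀ ξ < κ.ord, Q1Sle κ.ord S (p ξ) q := by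
  have hp : IsFusionSeq κ S p := ⟨hκ.isRegular, hmono, ha,
    fun γ hγ hlim => (hb γ hγ hlim).2.1, fun γ hγ hlim => (hb γ hγ hlim).2.2, hc⟩
  exact ⟨hp.natLimit, fun _ hξ => hp.le_natLimit hξ⟩

/-- a `λ`-sequence of conditions satisfying the fusion requirements
(a)–(c) has an upper bound in `Q¹_S`. -/
theorem Q1S_fusion (κ : Cardinal.{0}) (hκ : κ.IsInaccessible) (S : Set Ordinal)
    (hS : StatIn κ.ord S) (hS' : StatIn κ.ord (Set.Iio κ.ord \ S))
    (p : Ordinal → Q1S κ.ord S)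
    (hmono : ∀ ξ ζ, ξ < ζ → ζ < κ.ord → Q1Sle κ.ord S (p ξ) (p ζ))
    (ha : ∀ ξ < κ.ord, (p ξ).w = (p 0).w)
    (hb : ∀ γ < κ.ord, Order.IsSuccLimit γ →
      (p γ).w = (⋃ ξ ∈ Set.Iio γ, (p ξ).w) ∧
      (p γ).C = (⋂ ξ ∈ Set.Iio γ, (p ξ).C) ∧
      (p γ).c = natLimitC κ.ord S γ p)
    (hc : ∀ ξ < κ.ord, ∀ δ ∈ (p ξ).C,
      otp ((p ξ).C ∩ Set.Iio δ) = Ordinal.lift.{1} ξ →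
      (p (ξ + 1)).C ∩ Set.Iic δ = (p ξ).C ∩ Set.Iic δ ∧
      ∀ α ∈ (p (ξ + 1)).C ∩ Set.Iio δ, (p (ξ + 1)).c α = (p ξ).c α) :
    ∃ q : Q1S κ.ord S, ∀ ξ < κ.ord, Q1Sle κ.ord S (p ξ) q :=
  Q1S_fusion_general κ hκ S p hmono ha hb hc
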